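/- Let N be a topological space, n ∈ ℕ, and let F ⊆ N be a cellular subset of N (with respect to dimension n). Suppose F is a neighborhood retract in N, i.e. there exists an open set U ⊆ N with F ⊆ U and a continuous map r : U → F (U and F carrying the subspace topology) such that r(y) = y for all y ∈ F. Then F, with the subspace topology, is a contractible space. -/
import Mathlib


/-- A subset `F` of a topological space `N` is *cellular* with respect to dimension `n`
if every open set `U ⊇ F` contains a subset `B` homeomorphic to the closed unit ball
of `ℝⁿ` with `F ⊆ interior B`. -/
def IsCellular (n : ℕ) {N : Type*} [TopologicalSpace N] (F : Set N) : Prop :=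
  ∀ U : Set N, IsOpen U → F ⊆ U →
    ∃ B : Set N, B ⊆ U ∧
      Nonempty (B ≃ₜ (Metric.closedBall (0 : EuclideanSpace ℝ (Fin n)) 1)) ∧
      F ⊆ interior B

/-- A cellular subset which is a neighborhood retract is contractible. -/
theorem IsCellular.contractibleSpace_of_neighborhoodRetract
    {n : ℕ} {N : Type*} [TopologicalSpace N]
    {F : Set N} (hF : IsCellular n F)
    (U : Set N) (hU : IsOpen U) (hFU : F ⊆ U)
    (r : U → F) (hr : Continuous r)
    (hret : ∀ y : F, r ⟨(y : N), hFU y.2⟩ = y) :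
    ContractibleSpace F := by
  obtain ⟨B, hBU, ⟨e⟩, hFB⟩ := hF U hU hFU
  have hball : ContractibleSpace
      (Metric.closedBall (0 : EuclideanSpace ℝ (Fin n)) 1) :=
    (convex_closedBall _ _).contractibleSpace
      (Metric.nonempty_closedBall.mpr one_pos.le)
  have hB : ContractibleSpace B := e.contractibleSpace
  have hFB' : F ⊆ B := hFB.trans interior_subset
  -- inclusion F → B
  let ι : C(F, B) := ⟨fun x => ⟨(x : N), hFB' x.2⟩, by continuity⟩
  -- retraction B → F
  let ρ : C(B, F) := ⟨fun b => r ⟨(b : N), hBU b.2⟩, by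
    apply hr.comp
    exact Continuous.subtype_mk continuous_subtype_val _⟩
  have hid : (ρ.comp ι) = ContinuousMap.id F := by
    ext x
    exact congrArg Subtype.val (hret x)
  rw [contractible_iff_id_nullhomotopic]
  rw [← hid]
  have : ρ.comp ι = ρ.comp ((ContinuousMap.id B).comp ι) := rfl
  rw [this]
  exact ((id_nullhomotopic B).comp_left ι).comp_right ρ
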